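/- Let f be a density in 𝓢₀ and let F be the probability measure on [0,∞) with density f, i.e., F(A) = ∫_A f(y) dy. Then F belongs to 𝓢_loc: for every d > 0, F ∈ 𝓛_{Δ_d} and (F*F)((x, x+d])/F((x, x+d]) → 2 as x → ∞. -/

import Mathlib

open MeasureTheory Filter Set

noncomputable section

/-- A probability density supported on `[0, ∞)`. -/
def IsDensity (f : ℝ → ℝ) : Prop :=
  Measurable f ∧ (∀ x < (0:ℝ), f x = 0) ∧ (∀ x : ℝ, 0 ≤ f x) ∧
    ∫ y in Set.Ioi (0:ℝ), f y = 1

/-- The long-tailed density class `𝓛₀`. -/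
def LongTailedDensity (f : ℝ → ℝ) : Prop :=
  (∀ᶠ x in atTop, 0 < f x) ∧
  ∀ t : ℝ, Tendsto (fun x => f (x + t) / f x) atTop (nhds 1)

/-- The subexponential density class `𝓢₀`. -/
def SubexpDensity (f : ℝ → ℝ) : Prop :=
  LongTailedDensity f ∧
  Tendsto (fun x => (∫ y in (0:ℝ)..x, f (x - y) * f y) / f x) atTop (nhds 2)

/-- The local mass `F((x, x+d])` of a measure, as a real number. -/
def locMass (F : Measure ℝ) (d x : ℝ) : ℝ := (F (Set.Ioc x (x + d))).toReal

/-- `F ∈ 𝓛_{Δ_d}`. -/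
def MemLdelta (F : Measure ℝ) (d : ℝ) : Prop :=
  (∀ᶠ x in atTop, 0 < locMass F d x) ∧
  ∀ t > (0:ℝ), ∀ ε > (0:ℝ), ∀ᶠ x in atTop, ∀ s : ℝ, |s| ≤ t →
    |locMass F d (x + s) / locMass F d x - 1| ≤ ε

/-- Convolution of two measures on `ℝ`: the law of the sum of two
independent random variables with laws `F` and `G`. -/
def mconv (F G : Measure ℝ) : Measure ℝ :=
  Measure.map (fun p : ℝ × ℝ => p.1 + p.2) (F.prod G)

/-- `F ∈ 𝓢_{Δ_d}`. -/
def MemSdelta (F : Measure ℝ) (d : ℝ) : Prop :=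
  MemLdelta F d ∧
  Tendsto (fun x => locMass (mconv F F) d x / locMass F d x) atTop (nhds 2)

/-- The probability measure on `[0,∞)` with density `f`. -/
def densMeasure (f : ℝ → ℝ) : Measure ℝ :=
  volume.withDensity (fun y => ENNReal.ofReal (f y))

/-!
The local masses are window integrals `F((x, x+d]) = ∫_x^{x+d} f`. By the uniform convergence
theorem for long-tailed functions (proved for `log f` via Egorov's theorem and a Steinhaus-type
overlap argument), `f (x + v) / f x → 1` uniformly in `|v| ≤ T`, so every window of length `d`
near `x` carries mass `≈ d f(x)`; this gives `F ∈ 𝓛_{Δ_d}`. The measure `F * F` has density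
`f ⋆ f`, and `(f ⋆ f)(w) ~ 2 f(w)` integrates over `(x, x+d]` to `(F * F)(x, x+d] ~ 2 F(x, x+d]`.
-/

open scoped ENNReal Topology

theorem abs_div_sub_one_le_of_abs_sub_le {a b c δ : ℝ} (hc : 0 < c) (hδ : δ ≤ 1 / 2)
    (ha : |a - c| ≤ δ * c) (hb : |b - c| ≤ δ * c) : |a / b - 1| ≤ 4 * δ := by
  have hδ0 : 0 ≤ δ := nonneg_of_mul_nonneg_left ((abs_nonneg _).trans ha) hc
  have hb2 : c / 2 ≤ b := by nlinarith [(abs_le.1 hb).1]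
  have hb0 : 0 < b := by linarith
  rw [div_sub_one hb0.ne', abs_div, abs_of_pos hb0, div_le_iff₀ hb0]
  calc |a - b| = |(a - c) - (b - c)| := by ring_nf
    _ ≤ |a - c| + |b - c| := abs_sub _ _
    _ ≤ 4 * δ * (c / 2) := by linarith
    _ ≤ 4 * δ * b := by gcongr

theorem exists_mem_and_sub_mem_of_subset_Icc {A : Set ℝ} (hA : MeasurableSet A) {a b s : ℝ}
    (hsub : A ⊆ Icc a b) (hvol : ENNReal.ofReal (b - a + |s|) < 2 * volume A) :
    ∃ t ∈ A, t - s ∈ A := by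
  by_contra! hdisj
  set B := (fun t => t - s) ⁻¹' A
  have hB : volume B = volume A := measure_preimage_add_right _ _ _
  have hAB : A ∪ B ⊆ Icc (a + min 0 s) (b + max 0 s) := by
    rintro t (ht | ht) <;> obtain ⟨h1, h2⟩ := hsub ht
    · constructor <;> linarith [min_le_left 0 s, le_max_left 0 s]
    · constructor <;> linarith [min_le_right 0 s, le_max_right 0 s]
  have hunion : volume (A ∪ B) = 2 * volume A := by
    rw [measure_union (Set.disjoint_left.2 hdisj : Disjoint A B)
      (hA.preimage (measurable_sub_const s)), hB, two_mul]
  have hlen : b + max 0 s - (a + min 0 s) = b - a + |s| := by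
    have := max_sub_min_eq_abs' 0 s
    rw [zero_sub, abs_neg] at this
    linarith
  have := measure_mono (μ := volume) hAB
  rw [hunion, Real.volume_Icc, hlen] at this
  exact hvol.not_ge this

theorem TendstoUniformlyOn.tendsto_apply_of_mem {ι α : Type*} {p : Filter ι} {F : ι → α → ℝ}
    {S : Set α} {s : ι → α} (hF : TendstoUniformlyOn F 0 p S) (hs : ∀ i, s i ∈ S) :
    Tendsto (fun i => F i (s i)) p (𝓝 0) :=
  Metric.tendsto_nhds.2 fun ε hε => (Metric.tendstoUniformlyOn_iff.1 hF ε hε).mono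
    fun i hi => by simpa [dist_comm] using hi _ (hs i)

section UniformConvergenceTheorem

variable {h : ℝ → ℝ}

theorem tendsto_apply_add_sub_apply_of_bounded (hh : Measurable h)
    (hpt : ∀ t, Tendsto (fun x => h (x + t) - h x) atTop (𝓝 0))
    {x v : ℕ → ℝ} (hx : Tendsto x atTop atTop) {T : ℝ} (hv : ∀ n, |v n| ≤ T) :
    Tendsto (fun n => h (x n + v n) - h (x n)) atTop (𝓝 0) := by
  wlog hT : 0 < T generalizing T with H
  · exact H (fun n => (hv n).trans (le_max_left T 1)) (lt_max_of_lt_right one_pos)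
  have egorov : ∀ z : ℕ → ℝ, Tendsto z atTop atTop → ∃ E ⊆ Icc 0 (2 * T), MeasurableSet E ∧
      volume E ≤ ENNReal.ofReal (T / 8) ∧
      TendstoUniformlyOn (fun n t => h (z n + t) - h (z n)) 0 atTop (Icc 0 (2 * T) \ E) :=
    fun z hz => tendstoUniformlyOn_of_ae_tendsto
      (fun n => ((hh.comp (measurable_const_add _)).sub_const _).stronglyMeasurable)
      stronglyMeasurable_const measurableSet_Icc measure_Icc_lt_top.ne
      (ae_of_all _ fun t _ => (hpt t).comp hz) (by positivity)
  have hxv : Tendsto (fun n => x n + v n) atTop atTop :=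
    tendsto_atTop_mono (fun n => by linarith [(abs_le.1 (hv n)).1])
      (tendsto_atTop_add_const_right _ (-T) hx)
  obtain ⟨E₁, hE₁, hE₁m, hE₁v, hunif₁⟩ := egorov x hx
  obtain ⟨E₂, hE₂, hE₂m, hE₂v, hunif₂⟩ := egorov _ hxv
  set A := Icc 0 (2 * T) \ (E₁ ∪ E₂)
  have hAvol : ENNReal.ofReal (7 * T / 4) ≤ volume A := by
    calc ENNReal.ofReal (7 * T / 4) = ENNReal.ofReal (2 * T) - ENNReal.ofReal (T / 4) := by
          rw [← ENNReal.ofReal_sub _ (by positivity)]; ring_nf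
      _ ≤ volume (Icc 0 (2 * T)) - volume (E₁ ∪ E₂) := by
          gcongr
          · rw [Real.volume_Icc, sub_zero]
          · calc volume (E₁ ∪ E₂) ≤ volume E₁ + volume E₂ := measure_union_le _ _
              _ ≤ ENNReal.ofReal (T / 8) + ENNReal.ofReal (T / 8) := add_le_add hE₁v hE₂v
              _ = ENNReal.ofReal (T / 4) := by
                  rw [← ENNReal.ofReal_add (by positivity) (by positivity)]; ring_nf
      _ ≤ volume A := le_measure_sdiff
  -- `A` and `A + v n` lie in an interval of length at most `3T < 2 · 7T/4`, so they overlap.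
  have hpick : ∀ n, ∃ t ∈ A, t - v n ∈ A := fun n =>
    exists_mem_and_sub_mem_of_subset_Icc (measurableSet_Icc.diff (hE₁m.union hE₂m))
      sdiff_subset (by
        calc ENNReal.ofReal (2 * T - 0 + |v n|) ≤ ENNReal.ofReal (3 * T) := by
              gcongr; linarith [hv n]
          _ < ENNReal.ofReal (2 * (7 * T / 4)) :=
              (ENNReal.ofReal_lt_ofReal_iff (by positivity)).2 (by linarith)
          _ ≤ 2 * volume A := by
              rw [ENNReal.ofReal_mul zero_le_two, ENNReal.ofReal_ofNat]
              gcongr)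
  choose t htA htA' using hpick
  have h₁ := hunif₁.tendsto_apply_of_mem fun n =>
    sdiff_subset_sdiff_right subset_union_left (htA n)
  have h₂ := hunif₂.tendsto_apply_of_mem fun n =>
    sdiff_subset_sdiff_right subset_union_right (htA' n)
  simpa using h₁.sub h₂

theorem tendstoUniformlyOn_apply_add_sub_apply (hh : Measurable h)
    (hpt : ∀ t, Tendsto (fun x => h (x + t) - h x) atTop (𝓝 0)) (T : ℝ) :
    TendstoUniformlyOn (fun x v => h (x + v) - h x) 0 atTop (Icc (-T) T) := by
  rw [Metric.tendstoUniformlyOn_iff]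
  intro ε hε
  by_contra hc
  have hbad : ∀ n : ℕ, ∃ x ≥ (n : ℝ), ∃ v ∈ Icc (-T) T, ε ≤ dist 0 (h (x + v) - h x) := by
    intro n
    obtain ⟨x, hxn, hx⟩ := frequently_atTop.1 (not_eventually.1 hc) n
    push Not at hx
    exact ⟨x, hxn, hx⟩
  choose x hxn v hv hεle using hbad
  have hx : Tendsto x atTop atTop := tendsto_atTop_mono hxn tendsto_natCast_atTop_atTop
  obtain ⟨n, hn⟩ := ((tendsto_apply_add_sub_apply_of_bounded hh hpt hx
    fun n => abs_le.2 (hv n)).eventually (Metric.ball_mem_nhds _ hε)).exists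
  rw [dist_comm] at hn
  exact (hεle n).not_gt hn

end UniformConvergenceTheorem

theorem LongTailedDensity.eventually_abs_sub_le {f : ℝ → ℝ} (hL : LongTailedDensity f)
    (hm : Measurable f) (T : ℝ) {δ : ℝ} (hδ : 0 < δ) :
    ∀ᶠ x in atTop, ∀ v, |v| ≤ T → |f (x + v) - f x| ≤ δ * f x := by
  obtain ⟨X, hX⟩ := eventually_atTop.1 hL.1
  have hlog : ∀ t, Tendsto (fun x => Real.log (f (x + t)) - Real.log (f x)) atTop (𝓝 0) := by
    intro t
    have := ((Real.continuousAt_log one_ne_zero).tendsto.comp (hL.2 t))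
    rw [Real.log_one] at this
    refine this.congr' ?_
    filter_upwards [eventually_ge_atTop (X - t), eventually_ge_atTop X] with x hxt hx
    exact Real.log_div (hX _ (by linarith)).ne' (hX x hx).ne'
  have hunif := Metric.tendstoUniformlyOn_iff.1 (tendstoUniformlyOn_apply_add_sub_apply
    (Real.measurable_log.comp hm) hlog T) (min 1 (δ / 2)) (by positivity)
  filter_upwards [hunif, eventually_ge_atTop (X + T)] with x hx hxX v hv
  have hT := (abs_nonneg v).trans hv
  have hfx := hX x (by linarith)
  have hfxv := hX (x + v) (by linarith [(abs_le.1 hv).1])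
  set a := Real.log (f (x + v)) - Real.log (f x)
  have ha : |a| < min 1 (δ / 2) := by
    simpa only [Pi.zero_apply, dist_zero_left, Real.norm_eq_abs, Function.comp_apply]
      using hx v (abs_le.1 hv)
  have hfa : f (x + v) = f x * Real.exp a := by
    rw [Real.exp_sub, Real.exp_log hfxv, Real.exp_log hfx]; field_simp
  calc |f (x + v) - f x| = f x * |Real.exp a - 1| := by
        rw [hfa, ← mul_sub_one, abs_mul, abs_of_pos hfx]
    _ ≤ f x * (2 * |a|) := by gcongr; exact Real.abs_exp_sub_one_le (ha.le.trans (min_le_left _ _))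
    _ ≤ δ * f x := by nlinarith [min_le_right 1 (δ / 2)]

theorem locMass_densMeasure {f : ℝ → ℝ} (hm : Measurable f) (hpos : ∀ x, 0 ≤ f x) (d a : ℝ) :
    locMass (densMeasure f) d a = ∫ y in Ioc a (a + d), f y := by
  rw [locMass, densMeasure, withDensity_apply _ measurableSet_Ioc,
    integral_eq_lintegral_of_nonneg_ae (ae_of_all _ hpos) hm.aestronglyMeasurable]

theorem abs_setIntegral_Ioc_sub_le {f : ℝ → ℝ} (hm : Measurable f) {a d c r : ℝ} (hd : 0 ≤ d)
    (hb : ∀ y ∈ Ioc a (a + d), |f y - c| ≤ r) :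
    |(∫ y in Ioc a (a + d), f y) - d * c| ≤ d * r := by
  have hvol : volume.real (Ioc a (a + d)) = d := by simp [hd]
  have hint : IntegrableOn f (Ioc a (a + d)) :=
    Measure.integrableOn_of_bounded measure_Ioc_lt_top.ne hm.aestronglyMeasurable
      (M := |c| + r) ((ae_restrict_iff' measurableSet_Ioc).2 (ae_of_all _ fun y hy => by
        have := hb y hy
        rw [Real.norm_eq_abs]
        linarith [abs_sub_abs_le_abs_sub (f y) c]))
  have hsub : (∫ y in Ioc a (a + d), f y) - d * c = ∫ y in Ioc a (a + d), (f y - c) := by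
    rw [integral_sub hint (integrableOn_const measure_Ioc_lt_top.ne), setIntegral_const, hvol,
      smul_eq_mul]
  have := norm_setIntegral_le_of_norm_le_const (f := fun y => f y - c)
    (measure_Ioc_lt_top (μ := volume)) hb
  rwa [hvol, Real.norm_eq_abs, ← hsub, mul_comm r d] at this

theorem LongTailedDensity.eventually_abs_locMass_sub_le {f : ℝ → ℝ} (hL : LongTailedDensity f)
    (hm : Measurable f) (hpos : ∀ x, 0 ≤ f x) {d : ℝ} (hd : 0 ≤ d) (t : ℝ) {δ : ℝ} (hδ : 0 < δ) :
    ∀ᶠ x in atTop, ∀ s, |s| ≤ t →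
      |locMass (densMeasure f) d (x + s) - d * f x| ≤ δ * (d * f x) := by
  filter_upwards [hL.eventually_abs_sub_le hm (t + d) hδ] with x hx s hs
  rw [locMass_densMeasure hm hpos, mul_left_comm]
  refine abs_setIntegral_Ioc_sub_le hm hd fun y hy => ?_
  have := hx (y - x) (abs_le.2 ⟨by linarith [hy.1, (abs_le.1 hs).1], by
    linarith [hy.2, (abs_le.1 hs).2]⟩)
  rwa [add_sub_cancel] at this

theorem LongTailedDensity.memLdelta_densMeasure {f : ℝ → ℝ} (hL : LongTailedDensity f)
    (hm : Measurable f) (hpos : ∀ x, 0 ≤ f x) {d : ℝ} (hd : 0 < d) :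
    MemLdelta (densMeasure f) d := by
  have hmass := fun t δ (hδ : 0 < δ) => hL.eventually_abs_locMass_sub_le hm hpos hd.le t hδ
  refine ⟨?_, fun t ht ε hε => ?_⟩
  · filter_upwards [hmass 0 (1 / 2) one_half_pos, hL.1] with x hx hfx
    have := (abs_le.1 (by simpa using hx 0 abs_zero.le)).1
    nlinarith [mul_pos hd hfx]
  · filter_upwards [hmass t (min (ε / 4) (1 / 2)) (by positivity), hL.1] with x hx hfx s hs
    calc _ ≤ 4 * min (ε / 4) (1 / 2) :=
          abs_div_sub_one_le_of_abs_sub_le (mul_pos hd hfx) (min_le_right _ _) (hx s hs)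
            (by simpa using hx 0 (abs_zero.trans_le ht.le))
      _ ≤ ε := by linarith [min_le_left (ε / 4) (1 / 2)]

theorem lconvolution_ofReal_eq_intervalIntegral {f g : ℝ → ℝ} (hf0 : ∀ x < 0, f x = 0)
    (hg0 : ∀ x < 0, g x = 0) (hf : ∀ x, 0 ≤ f x) (hg : ∀ x, 0 ≤ g x) {w : ℝ} (hw : 0 ≤ w)
    (hi : IntervalIntegrable (fun y => g (w - y) * f y) volume 0 w) :
    ((fun y => ENNReal.ofReal (f y)) ⋆ₗ fun y => ENNReal.ofReal (g y)) w =
      ENNReal.ofReal (∫ y in 0..w, g (w - y) * f y) := by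
  have hsupp : (fun y => ENNReal.ofReal (f y) * ENNReal.ofReal (g (-y + w))).support ⊆ Icc 0 w := by
    intro y hy
    by_contra hy'
    rcases not_and_or.1 hy' with h | h
    · exact hy (by simp [hf0 y (not_le.1 h)])
    · exact hy (by simp [hg0 (-y + w) (by linarith [not_le.1 h])])
  rw [lconvolution_def, ← setLIntegral_eq_of_support_subset hsupp,
    setLIntegral_congr Ioc_ae_eq_Icc.symm,
    intervalIntegral.integral_of_le hw, ofReal_integral_eq_lintegral_ofReal
      ((intervalIntegrable_iff_integrableOn_Ioc_of_le hw).1 hi)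
      (ae_of_all _ fun y => mul_nonneg (hg _) (hf y))]
  refine lintegral_congr fun y => ?_
  rw [← ENNReal.ofReal_mul (hf y), mul_comm, neg_add_eq_sub]

theorem tendsto_locMass_withDensity_div {φ : ℝ → ℝ≥0∞} {f g : ℝ → ℝ} {d L : ℝ} (hL : 0 ≤ L)
    (hpos : ∀ᶠ x in atTop, 0 < locMass (densMeasure f) d x)
    (hφ : ∀ᶠ w in atTop, φ w = ENNReal.ofReal (g w)) (hf : ∀ᶠ w in atTop, 0 < f w)
    (hgf : Tendsto (fun w => g w / f w) atTop (𝓝 L)) :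
    Tendsto (fun x => locMass (volume.withDensity φ) d x / locMass (densMeasure f) d x)
      atTop (𝓝 L) := by
  rw [Metric.tendsto_nhds]
  intro ε hε
  have hbounds : ∀ᶠ w in atTop,
      ENNReal.ofReal (L - ε / 2) * ENNReal.ofReal (f w) ≤ φ w ∧
      φ w ≤ ENNReal.ofReal (L + ε / 2) * ENNReal.ofReal (f w) := by
    filter_upwards [hφ, hf, Metric.tendsto_nhds.1 hgf (ε / 2) (by positivity)]
      with w hφw hfw hgw
    rw [Real.dist_eq, abs_lt, lt_sub_iff_add_lt, sub_lt_iff_lt_add, lt_div_iff₀ hfw,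
      div_lt_iff₀ hfw] at hgw
    rw [hφw, ← ENNReal.ofReal_mul' hfw.le, ← ENNReal.ofReal_mul' hfw.le]
    exact ⟨ENNReal.ofReal_le_ofReal (by linarith), ENNReal.ofReal_le_ofReal (by linarith)⟩
  obtain ⟨X, hX⟩ := eventually_atTop.1 hbounds
  filter_upwards [eventually_ge_atTop X, hpos] with x hxX hmx
  set m := densMeasure f (Ioc x (x + d)) with hm_def
  have hm : m ≠ ∞ := (ENNReal.toReal_pos_iff.1 hmx).2.ne
  have hwindow : ∀ c, ∫⁻ w in Ioc x (x + d), ENNReal.ofReal c * ENNReal.ofReal (f w) =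
      ENNReal.ofReal c * m := fun c => by
    rw [lintegral_const_mul' _ _ ENNReal.ofReal_ne_top, hm_def, densMeasure,
      withDensity_apply _ measurableSet_Ioc]
  have hupper : volume.withDensity φ (Ioc x (x + d)) ≤ ENNReal.ofReal (L + ε / 2) * m := by
    rw [withDensity_apply _ measurableSet_Ioc, ← hwindow]
    exact setLIntegral_mono' measurableSet_Ioc fun w hw => (hX w (by linarith [hw.1])).2
  have hlower : ENNReal.ofReal (L - ε / 2) * m ≤ volume.withDensity φ (Ioc x (x + d)) := by
    rw [withDensity_apply _ measurableSet_Ioc, ← hwindow]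
    exact setLIntegral_mono' measurableSet_Ioc fun w hw => (hX w (by linarith [hw.1])).1
  have hfin : ENNReal.ofReal (L + ε / 2) * m ≠ ∞ := ENNReal.mul_ne_top ENNReal.ofReal_ne_top hm
  have hupper' := ENNReal.toReal_mono hfin hupper
  have hlower' := ENNReal.toReal_mono (ne_top_of_le_ne_top hfin hupper) hlower
  rw [ENNReal.toReal_mul, ENNReal.toReal_ofReal (by positivity)] at hupper'
  rw [ENNReal.toReal_mul, ENNReal.toReal_ofReal'] at hlower'
  change locMass _ d x ≤ _ * locMass _ d x at hupper'
  change _ * locMass _ d x ≤ locMass _ d x at hlower'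
  rw [Real.dist_eq, abs_lt, lt_sub_iff_add_lt, sub_lt_iff_lt_add, lt_div_iff₀ hmx,
    div_lt_iff₀ hmx]
  constructor <;> nlinarith [le_max_left (L - ε / 2) 0]

theorem subexp_density_implies_S_loc (f : ℝ → ℝ)
    (hf : IsDensity f) (hS : SubexpDensity f) :
    ∀ d > (0:ℝ), MemSdelta (densMeasure f) d := by
  obtain ⟨hm, h0, hpos, -⟩ := hf
  obtain ⟨hL, hratio⟩ := hS
  intro d hd
  have hLd := hL.memLdelta_densMeasure hm hpos hd
  have hφ : ∀ᶠ w in atTop, ((fun y => ENNReal.ofReal (f y)) ⋆ₗ fun y => ENNReal.ofReal (f y)) w =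
      ENNReal.ofReal (∫ y in 0..w, f (w - y) * f y) := by
    filter_upwards [eventually_ge_atTop 0, hratio.eventually_ne two_ne_zero] with w hw hne
    refine lconvolution_ofReal_eq_intervalIntegral h0 h0 hpos hpos hw ?_
    -- the integral is nonzero, so it is not the junk value of a non-integrable integrand
    by_contra hni
    rw [intervalIntegral.integral_undef hni, zero_div] at hne
    exact hne rfl
  have hmd : Measurable fun y => ENNReal.ofReal (f y) := ENNReal.measurable_ofReal.comp hm
  refine ⟨hLd, ?_⟩
  rw [show mconv (densMeasure f) (densMeasure f) = _ from conv_withDensity_eq_lconvolution hmd hmd]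
  exact tendsto_locMass_withDensity_div zero_le_two hLd.1 hφ hL.1 hratio
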